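/- arXiv:1305.5898 — 15 statements merged into one kernel-verified Lean document; each statement's English description precedes it below -/
import Mathlib

section
/- A loop Q(·) is a D-loop if and only if φ₁ ∘ φ_a ∘ φ₁ = (φ_{a_R⁻¹})⁻¹ for every a ∈ Q, where φ₁ and φ_a are the tracks of Q(·) and a_R⁻¹ is the right loop-inverse of a. -/
/-- A loop `Q(·)` is a D-loop iff `φ₁ ∘ φ_a ∘ φ₁ = (φ_{a_R⁻¹})⁻¹`
for every `a ∈ Q`, where the track `φ_a` is the permutation with `x · φ_a x = a`
and `a_R⁻¹` is the right loop-inverse of `a`. -/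
theorem stmt_2 {Q : Type*} (mul : Q → Q → Q) (one : Q)
    (hone_mul : ∀ x, mul one x = x) (hmul_one : ∀ x, mul x one = x)
    (hL : ∀ a, Function.Bijective (fun x => mul a x))
    (hR : ∀ a, Function.Bijective (fun x => mul x a))
    (rinv : Q → Q) (hrinv : ∀ a, mul a (rinv a) = one)
    (φ : Q → Equiv.Perm Q) (hφ : ∀ a x, mul x (φ a x) = a) :
    (∀ x y, rinv (mul x y) = mul (rinv y) (rinv x)) ↔
      (∀ a x, φ one (φ a (φ one x)) = (φ (rinv a)).symm x) := by
  have hφ1 : ∀ x, φ one x = rinv x := by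
    intro x
    exact (hL x).1 (show mul x (φ one x) = mul x (rinv x) by rw [hφ, hrinv])
  have hrinv1 : rinv one = one := by
    have := hrinv one
    rwa [hone_mul] at this
  constructor
  · intro hD
    have hinv2 : ∀ x, rinv (rinv x) = x := by
      intro x
      have h2 : rinv (mul x (rinv x)) = mul (rinv (rinv x)) (rinv x) := hD x (rinv x)
      rw [hrinv x, hrinv1] at h2
      exact (hR (rinv x)).1
        (show mul (rinv (rinv x)) (rinv x) = mul x (rinv x) by rw [← h2, hrinv])
    intro a x
    rw [Equiv.eq_symm_apply, hφ1 x, hφ1 (φ a (rinv x))]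
    have ht : mul (rinv x) (φ a (rinv x)) = a := hφ a (rinv x)
    have ha : rinv a = mul (rinv (φ a (rinv x))) x := by
      conv_lhs => rw [← ht, hD, hinv2]
    exact (hL (rinv (φ a (rinv x)))).1
      (show mul _ (φ (rinv a) _) = mul _ x by rw [hφ]; exact ha)
  · intro H
    have hstar : ∀ x t, rinv (mul (rinv x) t) = mul (rinv t) x := by
      intro x t
      have h1 := H (mul (rinv x) t) x
      have hφax : φ (mul (rinv x) t) (rinv x) = t :=
        (hL (rinv x)).1
          (show mul (rinv x) (φ (mul (rinv x) t) (rinv x)) = mul (rinv x) t by rw [hφ])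
      rw [hφ1 x, hφax, hφ1 t, Equiv.eq_symm_apply] at h1
      have h2 := hφ (rinv (mul (rinv x) t)) (rinv t)
      rw [h1] at h2
      exact h2.symm
    have hinv2 : ∀ x, rinv (rinv x) = x := by
      intro x
      have h := hstar x one
      rw [hmul_one, hrinv1, hone_mul] at h
      exact h
    intro x y
    have h := hstar (rinv x) y
    rwa [hinv2] at h
end

section
/- A loop Q(·) is a D-loop if and only if φ₁ ∘ φ_a⁻¹ ∘ φ₁ = φ_{a_R⁻¹} for every a ∈ Q, where φ₁ and φ_a are the tracks of Q(·) and a_R⁻¹ is the right loop-inverse of a. -/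
/-- A loop `Q(·)` is a D-loop iff `φ₁ ∘ φ_a⁻¹ ∘ φ₁ = φ_{a_R⁻¹}`
for every `a ∈ Q`, where the track `φ_a` is the permutation with `x · φ_a x = a`
and `a_R⁻¹` is the right loop-inverse of `a`. -/
theorem stmt_3 {Q : Type*} (mul : Q → Q → Q) (one : Q)
    (hone_mul : ∀ x, mul one x = x) (hmul_one : ∀ x, mul x one = x)
    (hL : ∀ a, Function.Bijective (fun x => mul a x))
    (hR : ∀ a, Function.Bijective (fun x => mul x a))
    (rinv : Q → Q) (hrinv : ∀ a, mul a (rinv a) = one)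
    (φ : Q → Equiv.Perm Q) (hφ : ∀ a x, mul x (φ a x) = a) :
    (∀ x y, rinv (mul x y) = mul (rinv y) (rinv x)) ↔
      (∀ a x, φ one ((φ a).symm (φ one x)) = φ (rinv a) x) := by
  -- φ one is right inversion
  have hone : ∀ x, φ one x = rinv x := fun x =>
    (hL x).1 (show mul x (φ one x) = mul x (rinv x) by rw [hφ, hrinv])
  have hrinv_one : rinv one = one := by
    have := hrinv one
    rwa [hone_mul] at this
  -- characterization of symm at rinv x
  have hsymm : ∀ u x, (φ (mul u (rinv x))).symm (rinv x) = u := by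
    intro u x
    have h : φ (mul u (rinv x)) u = rinv x :=
      (hL u).1 (show mul u (φ (mul u (rinv x)) u) = mul u (rinv x) by rw [hφ])
    rw [Equiv.symm_apply_eq]
    exact h.symm
  constructor
  · intro D a x
    -- rinv is involutive under D
    have invinv : ∀ b, rinv (rinv b) = b := by
      intro b
      have h1 : rinv (mul b (rinv b)) = mul (rinv (rinv b)) (rinv b) := D b (rinv b)
      rw [hrinv, hrinv_one] at h1
      exact (hR (rinv b)).1 (show mul (rinv (rinv b)) (rinv b) = mul b (rinv b) by
        rw [← h1, hrinv])
    set u := (φ a).symm (φ one x) with hu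
    have hφu : φ a u = rinv x := by rw [hu, Equiv.apply_symm_apply, hone]
    have hmu : mul u (rinv x) = a := by rw [← hφu, hφ]
    -- goal: φ one u = φ (rinv a) x, i.e. rinv u = φ (rinv a) x
    rw [hone]
    apply (hL x).1
    show mul x (rinv u) = mul x (φ (rinv a) x)
    rw [hφ, ← hmu, D, invinv]
  · intro H
    -- key identity: ∀ u x, mul x (rinv u) = rinv (mul u (rinv x))
    have K : ∀ u x, mul x (rinv u) = rinv (mul u (rinv x)) := by
      intro u x
      have h := H (mul u (rinv x)) x
      simp only [hone] at h
      rw [hsymm] at h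
      rw [← hφ (rinv (mul u (rinv x))) x, h]
    have invinv : ∀ b, rinv (rinv b) = b := by
      intro b
      have h := K one b
      rw [hrinv_one, hmul_one, hone_mul] at h
      exact h.symm
    intro x y
    have h := K (rinv y) x
    rw [invinv] at h
    rw [h, invinv]
end

section
/- A loop Q(·) is a D-loop if and only if φ₁ ∘ R_a ∘ φ₁ = L_{a_R⁻¹} for every a ∈ Q, where φ₁ is the track at the identity, R_a and L_a are the right and left translations of Q(·), and a_R⁻¹ is the right loop-inverse of a. -/
/-- A loop `Q(·)` is a D-loop iff `φ₁ ∘ R_a ∘ φ₁ = L_{a_R⁻¹}`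
for every `a ∈ Q`, where `φ₁` is the track at the identity (`x · φ₁ x = 1`),
`R_a`, `L_a` are the right and left translations, and `a_R⁻¹` is the right
loop-inverse of `a`. -/
theorem stmt_4 {Q : Type*} (mul : Q → Q → Q) (one : Q)
    (hone_mul : ∀ x, mul one x = x) (hmul_one : ∀ x, mul x one = x)
    (hL : ∀ a, Function.Bijective (fun x => mul a x))
    (hR : ∀ a, Function.Bijective (fun x => mul x a))
    (rinv : Q → Q) (hrinv : ∀ a, mul a (rinv a) = one)
    (φ₁ : Equiv.Perm Q) (hφ₁ : ∀ x, mul x (φ₁ x) = one) :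
    (∀ x y, rinv (mul x y) = mul (rinv y) (rinv x)) ↔
      (∀ a x, φ₁ (mul (φ₁ x) a) = mul (rinv a) x) := by
  have hphi : ∀ x, φ₁ x = rinv x := fun x =>
    (hL x).1 (by simpa using (hφ₁ x).trans (hrinv x).symm)
  have hone : rinv one = one := by
    have := hrinv one; rwa [hone_mul] at this
  constructor
  · intro hD a x
    have hdbl : ∀ z, rinv (rinv z) = z := by
      intro z
      have h1 : mul (rinv (rinv z)) (rinv z) = one := by
        rw [← hD, hrinv, hone]
      exact (hR (rinv z)).1 (by simpa using h1.trans (hrinv z).symm)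
    rw [hphi, hphi, hD, hdbl]
  · intro h x y
    have h' : ∀ a x, rinv (mul (rinv x) a) = mul (rinv a) x := by
      intro a x; have := h a x; rwa [hphi, hphi] at this
    have hdbl : ∀ z, rinv (rinv z) = z := by
      intro z
      have := h' one z
      rwa [hmul_one, hone, hone_mul] at this
    have := h' y (rinv x)
    rwa [hdbl] at this
end

section
/- A loop Q(·) is a D-loop if and only if φ₁ ∘ L_a ∘ φ₁ = R_{a_R⁻¹} for every a ∈ Q, where φ₁ is the track at the identity, R_a and L_a are the right and left translations of Q(·), and a_R⁻¹ is the right loop-inverse of a. -/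
/-- A loop `Q(·)` is a D-loop iff `φ₁ ∘ L_a ∘ φ₁ = R_{a_R⁻¹}`
for every `a ∈ Q`, where `φ₁` is the track at the identity (`x · φ₁ x = 1`),
`R_a`, `L_a` are the right and left translations, and `a_R⁻¹` is the right
loop-inverse of `a`. -/
theorem stmt_5 {Q : Type*} (mul : Q → Q → Q) (one : Q)
    (hone_mul : ∀ x, mul one x = x) (hmul_one : ∀ x, mul x one = x)
    (hL : ∀ a, Function.Bijective (fun x => mul a x))
    (hR : ∀ a, Function.Bijective (fun x => mul x a))
    (rinv : Q → Q) (hrinv : ∀ a, mul a (rinv a) = one)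
    (φ₁ : Equiv.Perm Q) (hφ₁ : ∀ x, mul x (φ₁ x) = one) :
    (∀ x y, rinv (mul x y) = mul (rinv y) (rinv x)) ↔
      (∀ a x, φ₁ (mul a (φ₁ x)) = mul x (rinv a)) := by
  have hphi : ∀ x, φ₁ x = rinv x := fun x =>
    (hL x).1 ((hφ₁ x).trans (hrinv x).symm)
  have hrone : rinv one = one := by
    have := hrinv one; rwa [hone_mul] at this
  constructor
  · intro hD a x
    have hinv : ∀ z, rinv (rinv z) = z := by
      intro z
      have h1 : mul (rinv (rinv z)) (rinv z) = one := by
        have := hD z (rinv z); rw [hrinv, hrone] at this; exact this.symm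
      exact (hR (rinv z)).1 (h1.trans (hrinv z).symm)
    rw [hphi, hphi, hD, hinv]
  · intro h x y
    have h' : ∀ a x, rinv (mul a (rinv x)) = mul x (rinv a) := by
      intro a x; have := h a x; rwa [hphi, hphi] at this
    have hinv : ∀ z, rinv (rinv z) = z := by
      intro z; have := h' one z; rwa [hrone, hmul_one, hone_mul] at this
    have := h' x (rinv y); rwa [hinv] at this
end

section
/- Let Q(·) be an IP-loop and let a ∈ Q be fixed with inverse element a'. Then the operation x∘y = (x·a')·(a·y) makes Q(∘) a D-loop whose identity element is the same as the identity of Q(·). -/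
/-- Let `Q(·)` be an IP-loop and `a ∈ Q` with inverse element
`a' = inv a`. Then `x ∘ y = (x·a')·(a·y)` makes `Q(∘)` a D-loop whose identity
is the identity of `Q(·)`: `Q(∘)` is a loop with identity `one` and has a
right loop-inverse map satisfying the antiautomorphic inverse property. -/
theorem stmt_6 {Q : Type*} (mul : Q → Q → Q) (one : Q)
    (hone_mul : ∀ x, mul one x = x) (hmul_one : ∀ x, mul x one = x)
    (hL : ∀ a, Function.Bijective (fun x => mul a x))
    (hR : ∀ a, Function.Bijective (fun x => mul x a))
    (inv : Q → Q)
    (hIPl : ∀ a b, mul (inv a) (mul a b) = b)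
    (hIPr : ∀ a b, mul (mul b a) (inv a) = b)
    (a : Q) (op : Q → Q → Q)
    (hop : ∀ x y, op x y = mul (mul x (inv a)) (mul a y)) :
    (∀ x, op one x = x) ∧ (∀ x, op x one = x) ∧
    (∀ c, Function.Bijective (fun x => op c x)) ∧
    (∀ c, Function.Bijective (fun x => op x c)) ∧
    ∃ rinv : Q → Q, (∀ x, op x (rinv x) = one) ∧
      ∀ x y, rinv (op x y) = op (rinv y) (rinv x) := by
  -- basic IP-loop facts
  have hmul_inv : ∀ u, mul u (inv u) = one := by
    intro u
    have h := hIPr u one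
    rwa [hone_mul] at h
  have hinv_mul : ∀ u, mul (inv u) u = one := by
    intro u
    have h := hIPl u one
    rwa [hmul_one] at h
  have hinv_inv : ∀ u, inv (inv u) = u := by
    intro u
    have h := hIPl (inv u) u
    rwa [hinv_mul, hmul_one] at h
  -- antiautomorphic inverse property of mul
  have haaip : ∀ x y, inv (mul x y) = mul (inv y) (inv x) := by
    intro x y
    have h1 : mul (inv x) (mul x y) = y := hIPl x y
    have h2 : mul y (inv (mul x y)) = inv x := by
      have := hIPr (mul x y) (inv x)
      rwa [h1] at this
    have h3 := hIPl y (inv (mul x y))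
    rw [h2] at h3
    exact h3.symm
  refine ⟨?_, ?_, ?_, ?_, inv, ?_, ?_⟩
  · intro x
    rw [hop, hone_mul, hIPl]
  · intro x
    rw [hop, hmul_one]
    have := hIPr (inv a) x
    rwa [hinv_inv] at this
  · intro c
    have : (fun x => op c x) = (fun x => mul (mul c (inv a)) x) ∘ (fun x => mul a x) := by
      funext x; simp [hop]
    rw [this]
    exact (hL _).comp (hL _)
  · intro c
    have : (fun x => op x c) = (fun x => mul x (mul a c)) ∘ (fun x => mul x (inv a)) := by
      funext x; simp [hop]
    rw [this]
    exact (hR _).comp (hR _)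
  · intro x
    rw [hop]
    have h : mul a (inv x) = inv (mul x (inv a)) := by
      rw [haaip, hinv_inv]
    rw [h, hmul_inv]
  · intro x y
    rw [hop, haaip, haaip, haaip, hinv_inv, hop]
end

section
/- Let Q(·) be an IP-loop, a ∈ Q with inverse element a', and let Q(∘) be the D-loop defined by x∘y = (x·a')·(a·y). Then a' is an inverse element of a in Q(∘) as well (i.e., (x∘a)∘a' = x and a'∘(a∘x) = x for all x ∈ Q) if and only if x·a = x∘a and a'·x = a'∘x hold for all x ∈ Q. -/
/-- Let `Q(·)` be an IP-loop, `a ∈ Q` with inverse element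
`a' = inv a`, and `Q(∘)` the D-loop defined by `x ∘ y = (x·a')·(a·y)`.
Then `a'` is an inverse element of `a` in `Q(∘)` (i.e. `(x∘a)∘a' = x` and
`a'∘(a∘x) = x` for all `x`) iff `x·a = x∘a` and `a'·x = a'∘x` for all `x`. -/
theorem stmt_7 {Q : Type*} (mul : Q → Q → Q) (one : Q)
    (hone_mul : ∀ x, mul one x = x) (hmul_one : ∀ x, mul x one = x)
    (hL : ∀ a, Function.Bijective (fun x => mul a x))
    (hR : ∀ a, Function.Bijective (fun x => mul x a))
    (inv : Q → Q)
    (hIPl : ∀ a b, mul (inv a) (mul a b) = b)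
    (hIPr : ∀ a b, mul (mul b a) (inv a) = b)
    (a : Q) (op : Q → Q → Q)
    (hop : ∀ x y, op x y = mul (mul x (inv a)) (mul a y)) :
    ((∀ x, op (op x a) (inv a) = x) ∧ (∀ x, op (inv a) (op a x) = x)) ↔
      ((∀ x, mul x a = op x a) ∧ (∀ x, mul (inv a) x = op (inv a) x)) := by
  have haa' : mul a (inv a) = one := by
    have := hIPr a one; rwa [hone_mul] at this
  constructor
  · rintro ⟨h1, h2⟩
    constructor
    · intro x
      -- (x∘a)∘a' = ((x∘a)·a')·(a·a') = (x∘a)·a' = x = (x·a)·a'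
      have e1 : mul (op x a) (inv a) = x := by
        have := h1 x
        rwa [hop (op x a) (inv a), haa', hmul_one] at this
      have e2 : mul (mul x a) (inv a) = x := hIPr a x
      exact ((hR (inv a)).1 (e2.trans e1.symm))
    · intro x
      -- a∘x = a·x, so a'∘(a·x) = x = a'·(a·x); surjectivity of L_a
      obtain ⟨y, hy⟩ := (hL a).2 x
      simp only at hy
      have hax : op a y = mul a y := by
        rw [hop, haa', hone_mul]
      have := h2 y
      rw [hax, hy] at this
      rw [this] at *
      rw [← hy, hIPl]
  · rintro ⟨h1, h2⟩
    have h'a : mul (inv a) a = one := by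
      have := hIPl a one; rwa [hmul_one] at this
    constructor
    · intro x
      rw [← h1 x, hop, haa', hmul_one, hIPr]
    · intro x
      rw [← h2 (op a x), hop a x, haa', hone_mul, hIPl]
end

section
/- Let Q(·) be an IP-loop, a ∈ Q with inverse element a', and let Q(∘) be the D-loop defined by x∘y = (x·a')·(a·y). Then a' is an inverse element of a in Q(∘) as well (i.e., (x∘a)∘a' = x and a'∘(a∘x) = x for all x ∈ Q) if and only if L_a∘L_a = L_{a·a} and R_a∘R_a = R_{a·a}, where L_a(x)=a·x and R_a(x)=x·a are the translations of Q(·); equivalently, iff a·(a·x) = (a·a)·x and (x·a)·a = x·(a·a) for all x ∈ Q. -/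
/-- Let `Q(·)` be an IP-loop, `a ∈ Q` with inverse element
`a' = inv a`, and `Q(∘)` the D-loop defined by `x ∘ y = (x·a')·(a·y)`.
Then `a'` is an inverse element of `a` in `Q(∘)` (i.e. `(x∘a)∘a' = x` and
`a'∘(a∘x) = x` for all `x`) iff `L_a ∘ L_a = L_{a·a}` and `R_a ∘ R_a = R_{a·a}`,
i.e. iff `a·(a·x) = (a·a)·x` and `(x·a)·a = x·(a·a)` for all `x`. -/
theorem stmt_8 {Q : Type*} (mul : Q → Q → Q) (one : Q)
    (hone_mul : ∀ x, mul one x = x) (hmul_one : ∀ x, mul x one = x)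
    (hL : ∀ a, Function.Bijective (fun x => mul a x))
    (hR : ∀ a, Function.Bijective (fun x => mul x a))
    (inv : Q → Q)
    (hIPl : ∀ a b, mul (inv a) (mul a b) = b)
    (hIPr : ∀ a b, mul (mul b a) (inv a) = b)
    (a : Q) (op : Q → Q → Q)
    (hop : ∀ x y, op x y = mul (mul x (inv a)) (mul a y)) :
    ((∀ x, op (op x a) (inv a) = x) ∧ (∀ x, op (inv a) (op a x) = x)) ↔
      ((∀ x, mul a (mul a x) = mul (mul a a) x) ∧
        (∀ x, mul (mul x a) a = mul x (mul a a))) := by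
  -- cancellation from the other side
  have h1 : ∀ c b, mul c (mul (inv c) b) = b := by
    intro c b
    have := (hL (inv c)).injective (a₁ := mul c (mul (inv c) b)) (a₂ := b)
    exact this (by rw [hIPl])
  have h2 : ∀ c b, mul (mul b (inv c)) c = b := by
    intro c b
    have := (hR (inv c)).injective (a₁ := mul (mul b (inv c)) c) (a₂ := b)
    exact this (by rw [hIPr])
  -- a · a' = 1 and a' · a = 1
  have hmul_inv : ∀ c, mul c (inv c) = one := by
    intro c; have := h1 c one; rwa [hmul_one] at this
  have hinv_mul : ∀ c, mul (inv c) c = one := by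
    intro c; have := hIPl c one; rwa [hmul_one] at this
  -- antiautomorphic inverse property
  have hanti : ∀ x y, inv (mul x y) = mul (inv y) (inv x) := by
    intro x y
    have e1 : mul (inv (mul x y)) x = inv y := by
      have := hIPl (mul x y) (inv y)
      rwa [hIPr y x] at this
    have := hIPr x (inv (mul x y))
    rw [e1] at this
    exact this.symm
  constructor
  · rintro ⟨hC1, hC2⟩
    constructor
    · intro x
      have h := hC2 x
      rw [hop, hop, hmul_inv, hone_mul, ← hanti] at h
      -- h : inv (a·a) · (a·(a·x)) = x
      have := h1 (mul a a) (mul a (mul a x))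
      rw [h] at this
      exact this.symm
    · intro x
      have h := hC1 (mul x a)
      rw [hop, hop, hmul_inv, hmul_one, hIPr] at h
      -- h : mul (mul x (mul a a)) (inv a) = mul x a
      have := (hR (inv a)).injective
        (a₁ := mul (mul (mul x a) a) (inv a)) (a₂ := mul (mul x (mul a a)) (inv a))
      have key : mul (mul (mul x a) a) (inv a) = mul (mul x (mul a a)) (inv a) := by
        rw [hIPr, h]
      exact (hR (inv a)).injective key
  · rintro ⟨hl, hr⟩
    constructor
    · intro x
      rw [hop, hop, hmul_inv, hmul_one]
      -- goal : ((x·a')·(a·a)) · a' = x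
      have e : mul (mul x (inv a)) (mul a a) = mul x a := by
        rw [← hr (mul x (inv a)), h2]
      rw [e, hIPr]
    · intro x
      rw [hop, hop, hmul_inv, hone_mul, ← hanti, hl, hIPl]
end

section
/- Let Q(·) be a D-loop with identity 1 and let φ₁ be its track at 1. Define the parastrophe operation • on Q by y•z = x ⟺ x·y = z, and the left division \ on Q by x\z = y ⟺ x·y = z. Then φ₁(y•z) = φ₁(y)\φ₁(z) for all y, z ∈ Q; that is, φ₁ is an isomorphism from the quasigroup Q(•) onto the quasigroup Q(\). -/
/-- Let `Q(·)` be a D-loop with identity `one` and track `φ₁` at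
the identity. With the parastrophe `•` defined by `y • z = x ⟺ x·y = z` and the
left division `\` defined by `x \ z = y ⟺ x·y = z`, we have
`φ₁(y • z) = φ₁(y) \ φ₁(z)` for all `y, z`; i.e. the permutation `φ₁` is an
isomorphism from `Q(•)` onto `Q(\)`. -/
theorem stmt_10 {Q : Type*} (mul : Q → Q → Q) (one : Q)
    (hone_mul : ∀ x, mul one x = x) (hmul_one : ∀ x, mul x one = x)
    (hL : ∀ a, Function.Bijective (fun x => mul a x))
    (hR : ∀ a, Function.Bijective (fun x => mul x a))
    (rinv : Q → Q) (hrinv : ∀ a, mul a (rinv a) = one)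
    (hD : ∀ x y, rinv (mul x y) = mul (rinv y) (rinv x))
    (φ₁ : Equiv.Perm Q) (hφ₁ : ∀ x, mul x (φ₁ x) = one)
    (bullet : Q → Q → Q) (hbullet : ∀ x y, bullet y (mul x y) = x)
    (ldiv : Q → Q → Q) (hldiv : ∀ x z, mul x (ldiv x z) = z) :
    ∀ y z, φ₁ (bullet y z) = ldiv (φ₁ y) (φ₁ z) := by
  have hphi : ∀ x, φ₁ x = rinv x := fun x => (hL x).1 ((hφ₁ x).trans (hrinv x).symm)
  intro y z
  obtain ⟨x, hx⟩ := (hR y).2 z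
  simp only at hx
  have h1 : bullet y z = x := by rw [← hx, hbullet]
  have h3 : mul (φ₁ y) (φ₁ x) = φ₁ z := by
    rw [hphi, hphi, hphi, ← hx, hD]
  have h4 : φ₁ x = ldiv (φ₁ y) (φ₁ z) :=
    (hL (φ₁ y)).1 (h3.trans (hldiv (φ₁ y) (φ₁ z)).symm)
  rw [h1, h4]
end

section
/- Let Q(·) be a D-loop with identity 1 and let φ₁ be its track at 1. Define the parastrophe operation ◁ on Q by z◁x = y ⟺ x·y = z, and the right division / on Q by z/y = x ⟺ x·y = z. Then φ₁(z◁x) = φ₁(z)/φ₁(x) for all x, z ∈ Q; that is, φ₁ is an isomorphism from the quasigroup Q(◁) onto the quasigroup Q(/). -/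
/-- Let `Q(·)` be a D-loop with identity `one` and track `φ₁` at
the identity. With the parastrophe `◁` defined by `z ◁ x = y ⟺ x·y = z` and the
right division `/` defined by `z / y = x ⟺ x·y = z`, we have
`φ₁(z ◁ x) = φ₁(z) / φ₁(x)` for all `x, z`; i.e. the permutation `φ₁` is an
isomorphism from `Q(◁)` onto `Q(/)`. -/
theorem stmt_11 {Q : Type*} (mul : Q → Q → Q) (one : Q)
    (hone_mul : ∀ x, mul one x = x) (hmul_one : ∀ x, mul x one = x)
    (hL : ∀ a, Function.Bijective (fun x => mul a x))
    (hR : ∀ a, Function.Bijective (fun x => mul x a))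
    (rinv : Q → Q) (hrinv : ∀ a, mul a (rinv a) = one)
    (hD : ∀ x y, rinv (mul x y) = mul (rinv y) (rinv x))
    (φ₁ : Equiv.Perm Q) (hφ₁ : ∀ x, mul x (φ₁ x) = one)
    (tri : Q → Q → Q) (htri : ∀ x y, tri (mul x y) x = y)
    (rdiv : Q → Q → Q) (hrdiv : ∀ y z, mul (rdiv z y) y = z) :
    ∀ x z, φ₁ (tri z x) = rdiv (φ₁ z) (φ₁ x) := by
  have hφ : ∀ a, φ₁ a = rinv a := fun a => (hL a).1 (by simp [hφ₁, hrinv])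
  intro x z
  obtain ⟨y, hy⟩ := (hL x).2 z
  simp only at hy
  rw [hφ, hφ, hφ, ← hy, htri, hD]
  exact ((hR (rinv x)).1 (by simp [hrdiv])).symm
end

section
/- Let Q(·) be a D-loop with tracks (φ_i). Then the set Φ = {φ_i ∘ φ_j⁻¹ : i, j ∈ Q} of all spins equals {φ_{1i} ∘ φ_{1j} : i, j ∈ Q}, where φ_{1k} = φ₁ ∘ φ_k⁻¹. -/
/-- In a D-loop `Q(·)` with tracks `φ`, the set
`Φ = {φ_i ∘ φ_j⁻¹ : i, j ∈ Q}` of all spins equals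
`{φ_{1i} ∘ φ_{1j} : i, j ∈ Q}` where `φ_{1k} = φ₁ ∘ φ_k⁻¹`. -/
theorem stmt_12 {Q : Type*} (mul : Q → Q → Q) (one : Q)
    (hone_mul : ∀ x, mul one x = x) (hmul_one : ∀ x, mul x one = x)
    (hL : ∀ a, Function.Bijective (fun x => mul a x))
    (hR : ∀ a, Function.Bijective (fun x => mul x a))
    (rinv : Q → Q) (hrinv : ∀ a, mul a (rinv a) = one)
    (hD : ∀ x y, rinv (mul x y) = mul (rinv y) (rinv x))
    (φ : Q → Equiv.Perm Q) (hφ : ∀ a x, mul x (φ a x) = a) :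
    {f : Equiv.Perm Q | ∃ i j, f = φ i * (φ j)⁻¹} =
      {f : Equiv.Perm Q | ∃ i j, f = (φ one * (φ i)⁻¹) * (φ one * (φ j)⁻¹)} := by
  -- φ one is given by rinv
  have hφone : ∀ x, φ one x = rinv x := by
    intro x
    exact (hL x).injective (by simpa using (hφ one x).trans (hrinv x).symm)
  -- rinv one = one
  have hro : rinv one = one := by
    have := hrinv one
    rw [hone_mul] at this
    exact this
  -- rinv is an involution
  have hinv2 : ∀ a, rinv (rinv a) = a := by
    intro a
    have h1 : mul (rinv (rinv a)) (rinv a) = one := by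
      have := congrArg rinv (hrinv a)
      rw [hD, hro] at this
      exact this
    have h2 : mul a (rinv a) = one := hrinv a
    exact (hR (rinv a)).injective (h1.trans h2.symm)
  -- key identity : φ one * (φ a)⁻¹ * φ one = φ (rinv a)
  have hkey : ∀ a, φ one * (φ a)⁻¹ * φ one = φ (rinv a) := by
    intro a
    ext x
    simp only [Equiv.Perm.mul_apply]
    set y := (φ a)⁻¹ (φ one x) with hy
    have hay : φ a y = φ one x := by rw [hy]; simp
    have h1 : mul y (rinv x) = a := by
      have := hφ a y
      rw [hay, hφone] at this
      exact this
    -- goal : φ one y = φ (rinv a) x, i.e. rinv y = φ (rinv a) x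
    have h2 : mul x (rinv y) = rinv a := by
      have := congrArg rinv h1
      rw [hD, hinv2] at this
      exact this
    rw [hφone]
    exact (hL x).injective (by simpa using h2.trans (hφ (rinv a) x).symm)
  ext f
  simp only [Set.mem_setOf_eq]
  constructor
  · rintro ⟨i, j, rfl⟩
    refine ⟨rinv i, j, ?_⟩
    have := hkey (rinv i)
    rw [hinv2] at this
    calc φ i * (φ j)⁻¹ = (φ one * (φ (rinv i))⁻¹ * φ one) * (φ j)⁻¹ := by rw [this]
      _ = (φ one * (φ (rinv i))⁻¹) * (φ one * (φ j)⁻¹) := by group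
  · rintro ⟨i, j, rfl⟩
    refine ⟨rinv i, j, ?_⟩
    rw [← hkey i]
    group
end

section
/- A D-loop Q(·) is isotopic to a group if and only if {φ_{1i} ∘ φ_{1j} : i, j ∈ Q} = Φ₁, where φ_{1k} = φ₁ ∘ φ_k⁻¹ and Φ₁ = {φ_{1j} : j ∈ Q}. -/
/-!
If the loop is isotopic to a group then, by Albert's argument, it is itself a group, and in a
group the spin `φ_{1j}` is right multiplication by `j⁻¹`, so the spins compose as
`φ_{1i} ∘ φ_{1j} = φ_{1,ij}`. Conversely, in a D-loop `φ_{1j}` is the unique permutation with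
`x⁻¹ · φ_{1j}(x) = j⁻¹`, so it is determined by its value `j⁻¹` at `1`. Closure of the spins under
composition then yields the identity `(x⁻¹z)⁻¹ · (x⁻¹w) = z⁻¹w`, which specialises first to the
left inverse property and then to associativity.
-/

/-- A binary operation `mul` on `Q` is isotopic to a group if there are a group
operation on `Q` and bijections `α, β, γ` of `Q` with `γ(x·y) = α(x)*β(y)`. -/
def IsotopicToGroup {Q : Type*} (mul : Q → Q → Q) : Prop :=
  ∃ (g : Q → Q → Q) (e : Q) (ginv : Q → Q),
    (∀ a b c, g (g a b) c = g a (g b c)) ∧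
    (∀ a, g e a = a) ∧ (∀ a, g a e = a) ∧
    (∀ a, g (ginv a) a = e) ∧
    ∃ α β γ : Q → Q, Function.Bijective α ∧ Function.Bijective β ∧
      Function.Bijective γ ∧ ∀ x y, γ (mul x y) = g (α x) (β y)

open Function

def spin {Q : Type*} (φ : Q → Equiv.Perm Q) (i j : Q) : Equiv.Perm Q := φ i * (φ j)⁻¹

theorem assoc_of_injective_mul_hom {Q G : Type*} [Semigroup G] {mul : Q → Q → Q}
    (θ : Q → G) (hθ : Injective θ) (hmul : ∀ x y, θ (mul x y) = θ x * θ y) :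
    ∀ x y z, mul (mul x y) z = mul x (mul y z) := fun x y z =>
  hθ (by rw [hmul, hmul, hmul, hmul, mul_assoc])

theorem IsotopicToGroup.assoc {Q : Type*} {mul : Q → Q → Q} {one : Q}
    (hone_mul : ∀ x, mul one x = x) (hmul_one : ∀ x, mul x one = x)
    (h : IsotopicToGroup mul) :
    ∀ x y z, mul (mul x y) z = mul x (mul y z) := by
  obtain ⟨g, e, ginv, gassoc, gone_mul, gmul_one, ginv_mul, α, β, γ, -, -, hγ, hiso⟩ := h
  let _ : Group Q :=
    { mul := g, one := e, inv := ginv,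
      mul_assoc := gassoc, one_mul := gone_mul, mul_one := gmul_one,
      inv_mul_cancel := ginv_mul }
  have hiso : ∀ x y, γ (mul x y) = α x * β y := hiso
  have hα : ∀ x, α x = γ x * (β one)⁻¹ := fun x => by
    rw [← hmul_one x, hiso, hmul_one]; group
  have hβ : ∀ y, β y = (α one)⁻¹ * γ y := fun y => by
    rw [← hone_mul y, hiso, hone_mul]; group
  -- `x ↦ c * γ x` is a homomorphism into the group once `c` absorbs the two translations.
  refine assoc_of_injective_mul_hom (fun x => (β one)⁻¹ * (α one)⁻¹ * γ x)
    ((mul_right_injective _).comp hγ.1) fun x y => ?_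
  rw [hiso, hα x, hβ y]
  group

theorem isotopicToGroup_of_assoc {Q : Type*} {mul : Q → Q → Q} {one : Q} {inv : Q → Q}
    (hone_mul : ∀ x, mul one x = x) (hmul_one : ∀ x, mul x one = x)
    (hinv_mul : ∀ a, mul (inv a) a = one)
    (hassoc : ∀ x y z, mul (mul x y) z = mul x (mul y z)) :
    IsotopicToGroup mul :=
  ⟨mul, one, inv, hassoc, hone_mul, hmul_one, hinv_mul, id, id, id,
    bijective_id, bijective_id, bijective_id, fun _ _ => rfl⟩

structure IsDLoop {Q : Type*} (mul : Q → Q → Q) (one : Q) (rinv : Q → Q) : Prop where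
  one_mul : ∀ x, mul one x = x
  mul_one : ∀ x, mul x one = x
  left_cancel : ∀ a, Injective (mul a)
  right_cancel : ∀ a, Injective (fun x => mul x a)
  mul_rinv : ∀ a, mul a (rinv a) = one
  rinv_mul : ∀ x y, rinv (mul x y) = mul (rinv y) (rinv x)

namespace IsDLoop

variable {Q : Type*} {mul : Q → Q → Q} {one : Q} {rinv : Q → Q} {φ : Q → Equiv.Perm Q}

theorem rinv_one (h : IsDLoop mul one rinv) : rinv one = one := by
  simpa only [h.one_mul] using h.mul_rinv one

theorem rinv_rinv (h : IsDLoop mul one rinv) (x : Q) : rinv (rinv x) = x :=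
  h.right_cancel (rinv x) <| by
    simp only [h.mul_rinv x, ← h.rinv_mul, h.rinv_one]

theorem rinv_mul_self (h : IsDLoop mul one rinv) (x : Q) : mul (rinv x) x = one := by
  simpa only [h.rinv_rinv] using h.mul_rinv (rinv x)

theorem track_one_apply (h : IsDLoop mul one rinv) (hφ : ∀ a x, mul x (φ a x) = a) (x : Q) :
    φ one x = rinv x :=
  h.left_cancel x (by rw [hφ, h.mul_rinv])

theorem mul_rinv_spin_apply (h : IsDLoop mul one rinv) (hφ : ∀ a x, mul x (φ a x) = a)
    (j x : Q) : mul (rinv x) (spin φ one j x) = rinv j := by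
  have hj : mul ((φ j)⁻¹ x) x = j := by
    simpa only [Equiv.Perm.inv_def, Equiv.apply_symm_apply] using hφ j ((φ j)⁻¹ x)
  rw [spin, Equiv.Perm.mul_apply, h.track_one_apply hφ, ← h.rinv_mul, hj]

theorem spin_apply_eq_iff (h : IsDLoop mul one rinv) (hφ : ∀ a x, mul x (φ a x) = a)
    {j x z : Q} : spin φ one j x = z ↔ mul (rinv x) z = rinv j :=
  ⟨fun e => e ▸ h.mul_rinv_spin_apply hφ j x,
    fun e => h.left_cancel _ ((h.mul_rinv_spin_apply hφ j x).trans e.symm)⟩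

theorem spin_apply_one (h : IsDLoop mul one rinv) (hφ : ∀ a x, mul x (φ a x) = a) (j : Q) :
    spin φ one j one = rinv j :=
  (h.spin_apply_eq_iff hφ).2 (by rw [h.rinv_one, h.one_mul])

theorem spin_apply_of_assoc (h : IsDLoop mul one rinv) (hφ : ∀ a x, mul x (φ a x) = a)
    (hassoc : ∀ x y z, mul (mul x y) z = mul x (mul y z)) (j x : Q) :
    spin φ one j x = mul x (rinv j) :=
  (h.spin_apply_eq_iff hφ).2 (by rw [← hassoc, h.rinv_mul_self, h.one_mul])

theorem spin_mul_spin_of_assoc (h : IsDLoop mul one rinv) (hφ : ∀ a x, mul x (φ a x) = a)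
    (hassoc : ∀ x y z, mul (mul x y) z = mul x (mul y z)) (i j : Q) :
    spin φ one i * spin φ one j = spin φ one (mul i j) := by
  ext x
  simp only [Equiv.Perm.mul_apply, h.spin_apply_of_assoc hφ hassoc]
  rw [hassoc, h.rinv_mul]

/-- The spins through `x ↦ z` and `z ↦ w` compose to the spin through `x ↦ w`; evaluating
this composite at `1` gives the identity. -/
theorem rinv_mul_mul_of_spin_closed (h : IsDLoop mul one rinv)
    (hφ : ∀ a x, mul x (φ a x) = a)
    (hclosed : ∀ i j, ∃ k, spin φ one i * spin φ one j = spin φ one k) (x z w : Q) :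
    mul (rinv (mul (rinv x) z)) (mul (rinv x) w) = mul (rinv z) w := by
  obtain ⟨k, hk⟩ := hclosed (rinv (mul (rinv z) w)) (rinv (mul (rinv x) z))
  have hxz : spin φ one (rinv (mul (rinv x) z)) x = z :=
    (h.spin_apply_eq_iff hφ).2 (h.rinv_rinv _).symm
  have hzw : spin φ one (rinv (mul (rinv z) w)) z = w :=
    (h.spin_apply_eq_iff hφ).2 (h.rinv_rinv _).symm
  have hxw : mul (rinv x) w = rinv k :=
    (h.spin_apply_eq_iff hφ).1 (by rw [← hk, Equiv.Perm.mul_apply, hxz, hzw])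
  have hk_one : spin φ one (rinv (mul (rinv z) w)) (mul (rinv x) z) = mul (rinv x) w := by
    rw [hxw, ← h.spin_apply_one hφ k, ← hk, Equiv.Perm.mul_apply, h.spin_apply_one hφ,
      h.rinv_rinv]
  simpa only [h.rinv_rinv] using (h.spin_apply_eq_iff hφ).1 hk_one

theorem assoc_of_spin_closed (h : IsDLoop mul one rinv) (hφ : ∀ a x, mul x (φ a x) = a)
    (hclosed : ∀ i j, ∃ k, spin φ one i * spin φ one j = spin φ one k) :
    ∀ x y z, mul (mul x y) z = mul x (mul y z) := by
  have key := h.rinv_mul_mul_of_spin_closed hφ hclosed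
  have hleft_inv : ∀ u w, mul (rinv u) (mul u w) = w := fun u w => by
    simpa only [h.rinv_rinv, h.mul_one, h.rinv_one, h.one_mul] using key (rinv u) one w
  intro s p t
  have hsp := key p (rinv s) (mul p t)
  rwa [← h.rinv_mul, h.rinv_rinv, h.rinv_rinv, hleft_inv] at hsp

end IsDLoop

/-- A D-loop `Q(·)` is isotopic to a group iff
`{φ_{1i} ∘ φ_{1j} : i, j ∈ Q} = Φ₁`, where `φ_{1k} = φ₁ ∘ φ_k⁻¹` and
`Φ₁ = {φ_{1j} : j ∈ Q}`. -/
theorem stmt_13 {Q : Type*} (mul : Q → Q → Q) (one : Q)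
    (hone_mul : ∀ x, mul one x = x) (hmul_one : ∀ x, mul x one = x)
    (hL : ∀ a, Function.Bijective (fun x => mul a x))
    (hR : ∀ a, Function.Bijective (fun x => mul x a))
    (rinv : Q → Q) (hrinv : ∀ a, mul a (rinv a) = one)
    (hD : ∀ x y, rinv (mul x y) = mul (rinv y) (rinv x))
    (φ : Q → Equiv.Perm Q) (hφ : ∀ a x, mul x (φ a x) = a) :
    IsotopicToGroup mul ↔
      {f : Equiv.Perm Q | ∃ i j, f = (φ one * (φ i)⁻¹) * (φ one * (φ j)⁻¹)} =
        {f : Equiv.Perm Q | ∃ j, f = φ one * (φ j)⁻¹} := by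
  have hQ : IsDLoop mul one rinv :=
    ⟨hone_mul, hmul_one, fun a => (hL a).injective, fun a => (hR a).injective, hrinv, hD⟩
  constructor
  · intro hiso
    have hassoc := hiso.assoc hone_mul hmul_one
    ext f
    constructor
    · rintro ⟨i, j, rfl⟩
      exact ⟨mul i j, hQ.spin_mul_spin_of_assoc hφ hassoc i j⟩
    · rintro ⟨j, rfl⟩
      exact ⟨j, one, by simp⟩
  · intro hspins
    refine isotopicToGroup_of_assoc hone_mul hmul_one hQ.rinv_mul_self
      (hQ.assoc_of_spin_closed hφ fun i j => ?_)
    have hij : spin φ one i * spin φ one j ∈ {f | ∃ k, f = φ one * (φ k)⁻¹} :=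
      hspins ▸ ⟨i, j, rfl⟩
    exact hij
end

section
/- A D-loop Q(·) is isotopic to a group if and only if for all i, j ∈ Q there exists k ∈ Q such that φ_i ∘ φ₁ ∘ φ_j = φ_k, where (φ_i) are the tracks of Q(·). -/
/-- A D-loop `Q(·)` is isotopic to a group iff for all `i, j ∈ Q`
there is `k ∈ Q` with `φ_i ∘ φ₁ ∘ φ_j = φ_k`, where `φ` are the tracks. -/
theorem stmt_15 {Q : Type*} (mul : Q → Q → Q) (one : Q)
    (hone_mul : ∀ x, mul one x = x) (hmul_one : ∀ x, mul x one = x)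
    (hL : ∀ a, Function.Bijective (fun x => mul a x))
    (hR : ∀ a, Function.Bijective (fun x => mul x a))
    (rinv : Q → Q) (hrinv : ∀ a, mul a (rinv a) = one)
    (hD : ∀ x y, rinv (mul x y) = mul (rinv y) (rinv x))
    (φ : Q → Equiv.Perm Q) (hφ : ∀ a x, mul x (φ a x) = a) :
    IsotopicToGroup mul ↔ (∀ i j, ∃ k, φ i * φ one * φ j = φ k) := by
  -- basic facts about tracks and right inverses
  have Linj : ∀ a : Q, Function.Injective (fun x => mul a x) := fun a => (hL a).1
  have φ_eq : ∀ a x y, mul x y = a → φ a x = y := by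
    intro a x y h
    exact Linj x (show mul x (φ a x) = mul x y from (hφ a x).trans h.symm)
  have rinv_eq : ∀ x, φ one x = rinv x := fun x => φ_eq one x (rinv x) (hrinv x)
  have rinv_one : rinv one = one :=
    Linj one (show mul one (rinv one) = mul one one from
      (hrinv one).trans (hone_mul one).symm)
  -- from associativity we get the group structure facts and the track formula
  have rinv_left_of_assoc : (∀ a b c, mul (mul a b) c = mul a (mul b c)) →
      ∀ x, mul (rinv x) x = one := by
    intro assoc x
    apply Linj x
    show mul x (mul (rinv x) x) = mul x one
    rw [← assoc, hrinv, hone_mul, hmul_one]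
  constructor
  · -- isotopic to a group → track condition
    rintro ⟨g, e, ginv, gassoc, ge, geR, ginvL, α, β, γ, hα, hβ, hγ, hiso⟩
    -- inverses in the group are two-sided
    have ginvR : ∀ a, g a (ginv a) = e := by
      intro a
      have h1 : g (ginv (ginv a)) (ginv a) = e := ginvL (ginv a)
      have h2 : a = ginv (ginv a) := by
        calc a = g e a := (ge a).symm
          _ = g (g (ginv (ginv a)) (ginv a)) a := by rw [h1]
          _ = g (ginv (ginv a)) (g (ginv a) a) := gassoc _ _ _
          _ = g (ginv (ginv a)) e := by rw [ginvL]
          _ = ginv (ginv a) := geR _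
      nth_rewrite 1 [h2]
      exact h1
    -- Albert-style argument: mul is associative
    have h1 : ∀ x, α x = g (γ x) (ginv (β one)) := by
      intro x
      have : γ (mul x one) = g (α x) (β one) := hiso x one
      rw [hmul_one] at this
      rw [this, gassoc, ginvR, geR]
    have h2 : ∀ y, β y = g (ginv (α one)) (γ y) := by
      intro y
      have : γ (mul one y) = g (α one) (β y) := hiso one y
      rw [hone_mul] at this
      rw [this, ← gassoc, ginvL, ge]
    set m := g (ginv (β one)) (ginv (α one)) with hm
    have key : ∀ x y, γ (mul x y) = g (γ x) (g m (γ y)) := by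
      intro x y
      rw [hiso x y, h1 x, h2 y, hm]
      simp only [gassoc]
    have assoc : ∀ a b c, mul (mul a b) c = mul a (mul b c) := by
      intro a b c
      apply hγ.1
      rw [key, key, key, key]
      simp only [gassoc]
    have rinv_left := rinv_left_of_assoc assoc
    have rinv_rinv : ∀ x, rinv (rinv x) = x :=
      fun x => Linj (rinv x) (show mul (rinv x) (rinv (rinv x)) = mul (rinv x) x from
        (hrinv (rinv x)).trans (rinv_left x).symm)
    have φ_form : ∀ a x, φ a x = mul (rinv x) a := by
      intro a x
      apply φ_eq
      rw [← assoc, hrinv, hone_mul]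
    intro i j
    refine ⟨mul j i, ?_⟩
    ext x
    show φ i (φ one (φ j x)) = φ (mul j i) x
    rw [φ_form j x, rinv_eq, hD, rinv_rinv, φ_form, hD, rinv_rinv, φ_form, assoc]
  · -- track condition → associative → isotopic (to itself)
    intro h
    -- main identity: rinv a · b = rinv (x·a) · (x·b)
    have eq1 : ∀ x a b, mul (rinv a) b = mul (rinv (mul x a)) (mul x b) := by
      intro x a b
      obtain ⟨k, hk⟩ := h (mul (rinv (mul x a)) (mul x b)) (mul x a)
      set i := mul (rinv (mul x a)) (mul x b) with hi
      set j := mul x a with hj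
      have hk' : ∀ z, φ i (φ one (φ j z)) = φ k z := fun z => by
        have := congrArg (fun (e : Equiv.Perm Q) => e z) hk
        simpa using this
      -- evaluate at one : k = mul x b
      have e1 : φ j one = j := φ_eq j one j (hone_mul j)
      have e2 : φ i (rinv j) = k := by
        have := hk' one
        rw [e1, rinv_eq] at this
        exact this.trans (φ_eq k one k (hone_mul k))
      have e3 : mul (rinv j) k = i := by rw [← e2]; exact hφ i (rinv j)
      have hkxb : k = mul x b := by
        apply Linj (rinv j)
        show mul (rinv j) k = mul (rinv j) (mul x b)
        rw [e3, hi]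
      -- evaluate at x
      have e4 : φ j x = a := φ_eq j x a hj.symm
      have e5 : φ k x = b := φ_eq k x b (by rw [hkxb])
      have := hk' x
      rw [e4, rinv_eq, e5] at this
      have e6 : mul (rinv a) b = i := by
        conv_lhs => rw [← this]
        exact hφ i (rinv a)
      rw [e6]
    have star : ∀ x b, mul (rinv x) (mul x b) = b := by
      intro x b
      have := eq1 x one b
      rw [rinv_one, hone_mul, hmul_one] at this
      exact this.symm
    have rinv_surj : ∀ y : Q, ∃ x, rinv x = y := by
      intro y
      obtain ⟨x, hx⟩ := (φ one).surjective y
      exact ⟨x, by rw [← rinv_eq, hx]⟩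
    have assoc : ∀ a b c, mul (mul a b) c = mul a (mul b c) := by
      intro c y t
      obtain ⟨x, hx⟩ := rinv_surj y
      obtain ⟨a, ha⟩ := rinv_surj c
      obtain ⟨b, hb⟩ := (hL x).2 t
      simp only at hb
      rw [← hx, ← ha, ← hb, ← hD, star x b]
      exact (eq1 x a b).symm
    exact ⟨mul, one, rinv, assoc, hone_mul, hmul_one, rinv_left_of_assoc assoc,
      id, id, id, Function.bijective_id, Function.bijective_id, Function.bijective_id,
      fun x y => rfl⟩
end

section
/- Let Q(·) be a quasigroup which is isotopic to a D-loop Q(∘), i.e., there exist bijections α, β, γ of Q with γ(x·y) = α(x)∘β(y) for all x, y. Then there exist a permutation σ of Q and an element p ∈ Q such that φ_p ∘ φ_i⁻¹ ∘ φ_p = φ_{σ(i)} for every i ∈ Q, where (φ_i) are the tracks of Q(·). -/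
/-!
Put `p := γ⁻¹(1)`. Then `x · y = p` exactly when `β y` is the right inverse of `α x` in `Q(∘)`.
For `u = φ_p(x)`, `v = φ_i⁻¹(u)` and `w = φ_p(v)` we get `v · u = i`, so `α v ∘ β u = γ i`, and the
anti-automorphism law of the D-loop turns this into `α x ∘ β w = (γ i)_R⁻¹`. Hence
`φ_p φ_i⁻¹ φ_p = φ_{σ(i)}` with `σ = γ⁻¹ ∘ (·)_R⁻¹ ∘ γ`, and `σ` is a permutation because
`(·)_R⁻¹` is an involution.
-/

open Function

section DLoop

variable {L : Type*} {op : L → L → L} {one : L} {rinv : L → L}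

theorem rinv_one (hone : ∀ x, op one x = x) (hrinv : ∀ a, op a (rinv a) = one) :
    rinv one = one := by
  simpa [hone] using hrinv one

theorem eq_rinv_of_op_eq_one (hcancel : ∀ c, Injective (op c))
    (hrinv : ∀ a, op a (rinv a) = one) {a b : L} (h : op a b = one) : b = rinv a :=
  hcancel a (h.trans (hrinv a).symm)

theorem rinv_involutive (hone : ∀ x, op one x = x)
    (hcancel : ∀ c, Injective (fun x => op x c)) (hrinv : ∀ a, op a (rinv a) = one)
    (hD : ∀ x y, rinv (op x y) = op (rinv y) (rinv x)) : Involutive rinv := by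
  intro a
  apply hcancel (rinv a)
  show op (rinv (rinv a)) (rinv a) = op a (rinv a)
  rw [← hD, hrinv, rinv_one hone hrinv]

end DLoop

section Tracks

variable {Q : Type*} {mul : Q → Q → Q} {φ : Q → Equiv.Perm Q}

theorem track_apply_eq_of_mul_eq (hcancel : ∀ a, Injective (mul a))
    (hφ : ∀ a x, mul x (φ a x) = a) {a x y : Q} (h : mul x y = a) : φ a x = y :=
  hcancel x ((hφ a x).trans h.symm)

end Tracks

section Isotopy

variable {Q : Type*} {mul : Q → Q → Q} {φ : Q → Equiv.Perm Q}
  {op : Q → Q → Q} {one : Q} {rinv : Q → Q} {α β γ : Q → Q}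

theorem isotope_mul_track_conj (hφ : ∀ a x, mul x (φ a x) = a)
    (hcancel : ∀ c, Injective (op c)) (hrinv : ∀ a, op a (rinv a) = one)
    (hD : ∀ x y, rinv (op x y) = op (rinv y) (rinv x)) (hinv : Involutive rinv)
    (hiso : ∀ x y, γ (mul x y) = op (α x) (β y)) {p : Q} (hp : γ p = one) (i x : Q) :
    γ (mul x ((φ p * (φ i)⁻¹ * φ p) x)) = rinv (γ i) := by
  set u := φ p x
  set v := (φ i)⁻¹ u
  have hvu : mul v u = i := by simpa [v] using hφ i v
  have hu : β u = rinv (α x) :=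
    eq_rinv_of_op_eq_one hcancel hrinv (by rw [← hiso, hφ, hp])
  have hw : β (φ p v) = rinv (α v) :=
    eq_rinv_of_op_eq_one hcancel hrinv (by rw [← hiso, hφ, hp])
  calc γ (mul x (φ p v)) = op (α x) (rinv (α v)) := by rw [hiso, hw]
    _ = rinv (op (α v) (β u)) := by rw [hD, hu, hinv]
    _ = rinv (γ i) := by rw [← hiso, hvu]

end Isotopy

theorem stmt_16_general {Q : Type*} (mul : Q → Q → Q)
    (hL : ∀ a, Function.Bijective (fun x => mul a x))
    (φ : Q → Equiv.Perm Q) (hφ : ∀ a x, mul x (φ a x) = a)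
    (op : Q → Q → Q) (oneo : Q)
    (hopone_l : ∀ x, op oneo x = x)
    (hopL : ∀ c, Function.Bijective (fun x => op c x))
    (hopR : ∀ c, Function.Bijective (fun x => op x c))
    (rinvo : Q → Q) (hrinvo : ∀ a, op a (rinvo a) = oneo)
    (hD : ∀ x y, rinvo (op x y) = op (rinvo y) (rinvo x))
    (α β γ : Q → Q)
    (hγ : Function.Bijective γ)
    (hiso : ∀ x y, γ (mul x y) = op (α x) (β y)) :
    ∃ (σ : Q → Q) (p : Q), Function.Bijective σ ∧
      ∀ i, φ p * (φ i)⁻¹ * φ p = φ (σ i) := by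
  have hinv := rinv_involutive hopone_l (fun c => (hopR c).1) hrinvo hD
  set g := Equiv.ofBijective γ hγ
  refine ⟨g.symm ∘ rinvo ∘ γ, g.symm oneo, g.symm.bijective.comp (hinv.bijective.comp hγ),
    fun i => Equiv.ext fun x => ?_⟩
  refine (track_apply_eq_of_mul_eq (fun a => (hL a).1) hφ (hγ.1 ?_)).symm
  rw [isotope_mul_track_conj hφ (fun c => (hopL c).1) hrinvo hD hinv hiso
    (g.apply_symm_apply oneo)]
  exact (g.apply_symm_apply _).symm

/-- If a quasigroup `Q(·)` with tracks `φ` is isotopic to a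
D-loop `Q(∘)` (via bijections `α, β, γ` with `γ(x·y) = α(x) ∘ β(y)`), then
there are a permutation `σ` of `Q` and `p ∈ Q` with
`φ_p ∘ φ_i⁻¹ ∘ φ_p = φ_{σ(i)}` for every `i ∈ Q`. -/
theorem stmt_16 {Q : Type*} (mul : Q → Q → Q)
    (hL : ∀ a, Function.Bijective (fun x => mul a x))
    (hR : ∀ a, Function.Bijective (fun x => mul x a))
    (φ : Q → Equiv.Perm Q) (hφ : ∀ a x, mul x (φ a x) = a)
    (op : Q → Q → Q) (oneo : Q)
    (hopone_l : ∀ x, op oneo x = x) (hopone_r : ∀ x, op x oneo = x)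
    (hopL : ∀ c, Function.Bijective (fun x => op c x))
    (hopR : ∀ c, Function.Bijective (fun x => op x c))
    (rinvo : Q → Q) (hrinvo : ∀ a, op a (rinvo a) = oneo)
    (hD : ∀ x y, rinvo (op x y) = op (rinvo y) (rinvo x))
    (α β γ : Q → Q)
    (hα : Function.Bijective α) (hβ : Function.Bijective β)
    (hγ : Function.Bijective γ)
    (hiso : ∀ x y, γ (mul x y) = op (α x) (β y)) :
    ∃ (σ : Q → Q) (p : Q), Function.Bijective σ ∧
      ∀ i, φ p * (φ i)⁻¹ * φ p = φ (σ i) :=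
  stmt_16_general mul hL φ hφ op oneo hopone_l hopL hopR rinvo hrinvo hD α β γ hγ hiso
end

section
/- Let Q(·) be a quasigroup and Q(∘) a loop with identity 1 on the same set Q, isotopic via γ(x·y) = α(x)∘β(y) for bijections α, β, γ of Q. Let (φ_i) be the tracks of Q(·) and (ψ_i) the tracks of Q(∘). If φ_p ∘ φ_i⁻¹ ∘ φ_p = φ_{σ(i)} holds for all i ∈ Q, where p = γ⁻¹(1) and σ = γ⁻¹ ∘ ψ₁ ∘ γ, then Q(∘) is a D-loop. -/
/-!
The tracks of the quasigroup are conjugates of the tracks of the loop,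
`φ_a = β⁻¹ ψ_{γ a} α`, so the hypothesis on `φ` is equivalent to `J ψ_a⁻¹ J = ψ_{J a}` in the
loop, where `J = ψ₁` is the right loop-inverse map. Applying this to `u` with `a = v ∘ J u`
gives `u ∘ J v = J (v ∘ J u)`; at `v = 1` it says that `J` is an involution, and substituting
`J y` for `u` turns it into `J (x ∘ y) = J y ∘ J x`.
-/

open Function Equiv

section Tracks

variable {Q : Type*}

theorem track_eq_of_mul_eq {mul : Q → Q → Q} (hL : ∀ a, Injective (mul a))
    {φ : Q → Perm Q} (hφ : ∀ a x, mul x (φ a x) = a) {a x t : Q} (h : mul x t = a) :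
    φ a x = t :=
  hL x ((hφ a x).trans h.symm)

theorem track_eq_of_isotopy {mul op : Q → Q → Q} (hL : ∀ a, Injective (mul a))
    {φ ψ : Q → Perm Q} (hφ : ∀ a x, mul x (φ a x) = a) (hψ : ∀ a x, op x (ψ a x) = a)
    {α β γ : Perm Q} (hiso : ∀ x y, γ (mul x y) = op (α x) (β y)) (a : Q) :
    φ a = β.symm * ψ (γ a) * α := by
  ext x
  refine track_eq_of_mul_eq hL hφ (γ.injective ?_)
  rw [hiso, Perm.mul_apply, Perm.mul_apply, Equiv.apply_symm_apply]
  exact hψ _ _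

theorem track_conj_of_isotopy {mul op : Q → Q → Q} (hL : ∀ a, Injective (mul a))
    {φ ψ : Q → Perm Q} (hφ : ∀ a x, mul x (φ a x) = a) (hψ : ∀ a x, op x (ψ a x) = a)
    {α β γ : Perm Q} (hiso : ∀ x y, γ (mul x y) = op (α x) (β y)) {e : Q}
    (hconj : ∀ i, φ (γ.symm e) * (φ i)⁻¹ * φ (γ.symm e) = φ (γ.symm (ψ e (γ i))))
    (a : Q) : ψ e * (ψ a)⁻¹ * ψ e = ψ (ψ e a) := by
  have h := hconj (γ.symm a)
  simp only [track_eq_of_isotopy hL hφ hψ hiso, Equiv.apply_symm_apply] at h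
  have h' : β.symm * (ψ e * (ψ a)⁻¹ * ψ e) * α = β.symm * ψ (ψ e a) * α := by
    rw [← h]
    group
  rwa [mul_left_inj, mul_right_inj] at h'

end Tracks

section Loop

variable {Q : Type*} {op : Q → Q → Q} {e : Q} {ψ : Q → Perm Q}

theorem op_track_eq_track_op (hL : ∀ c, Injective (op c)) (hψ : ∀ a x, op x (ψ a x) = a)
    (hconj : ∀ a, ψ e * (ψ a)⁻¹ * ψ e = ψ (ψ e a)) (u v : Q) :
    op u (ψ e v) = ψ e (op v (ψ e u)) := by
  set a := op v (ψ e u)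
  have hv : (ψ a)⁻¹ (ψ e u) = v := by
    rw [Perm.inv_eq_iff_eq]
    exact (track_eq_of_mul_eq hL hψ rfl).symm
  have h := congrArg (· u) (hconj a)
  simp only [Perm.mul_apply, hv] at h
  rw [h]
  exact hψ _ _

theorem track_involutive (hone_l : ∀ x, op e x = x) (hone_r : ∀ x, op x e = x)
    (hL : ∀ c, Injective (op c)) (hψ : ∀ a x, op x (ψ a x) = a)
    (hconj : ∀ a, ψ e * (ψ a)⁻¹ * ψ e = ψ (ψ e a)) : Involutive (ψ e) := by
  intro x
  have he : ψ e e = e := track_eq_of_mul_eq hL hψ (hone_l e)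
  have h := op_track_eq_track_op hL hψ hconj x e
  rw [he, hone_r, hone_l] at h
  exact h.symm

theorem track_op_eq_op_track (hone_l : ∀ x, op e x = x) (hone_r : ∀ x, op x e = x)
    (hL : ∀ c, Injective (op c)) (hψ : ∀ a x, op x (ψ a x) = a)
    (hconj : ∀ a, ψ e * (ψ a)⁻¹ * ψ e = ψ (ψ e a)) (x y : Q) :
    ψ e (op x y) = op (ψ e y) (ψ e x) := by
  have h := op_track_eq_track_op hL hψ hconj (ψ e y) x
  rwa [track_involutive hone_l hone_r hL hψ hconj y, eq_comm] at h

end Loop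

theorem stmt_17_general {Q : Type*} (mul : Q → Q → Q)
    (hL : ∀ a, Function.Bijective (fun x => mul a x))
    (φ : Q → Equiv.Perm Q) (hφ : ∀ a x, mul x (φ a x) = a)
    (op : Q → Q → Q) (oneo : Q)
    (hopone_l : ∀ x, op oneo x = x) (hopone_r : ∀ x, op x oneo = x)
    (hopL : ∀ c, Function.Bijective (fun x => op c x))
    (ψ : Q → Equiv.Perm Q) (hψ : ∀ a x, op x (ψ a x) = a)
    (α β γ : Q ≃ Q)
    (hiso : ∀ x y, γ (mul x y) = op (α x) (β y))
    (hmain : ∀ i, φ (γ.symm oneo) * (φ i)⁻¹ * φ (γ.symm oneo) =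
      φ (γ.symm (ψ oneo (γ i)))) :
    ∀ x y, ψ oneo (op x y) = op (ψ oneo y) (ψ oneo x) :=
  track_op_eq_op_track hopone_l hopone_r (fun c => (hopL c).1) hψ
    (track_conj_of_isotopy (fun a => (hL a).1) hφ hψ hiso hmain)

/-- Let a quasigroup `Q(·)` with tracks `φ` and a loop `Q(∘)`
with identity `oneo` and tracks `ψ` be isotopic via bijections `α, β, γ` with
`γ(x·y) = α(x) ∘ β(y)`. If `φ_p ∘ φ_i⁻¹ ∘ φ_p = φ_{σ(i)}` holds for all `i`,
where `p = γ⁻¹(1)` and `σ = γ⁻¹ ∘ ψ₁ ∘ γ`, then `Q(∘)` is a D-loop (its right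
loop-inverse map is `ψ₁` and it satisfies the antiautomorphic inverse
property). -/
theorem stmt_17 {Q : Type*} (mul : Q → Q → Q)
    (hL : ∀ a, Function.Bijective (fun x => mul a x))
    (hR : ∀ a, Function.Bijective (fun x => mul x a))
    (φ : Q → Equiv.Perm Q) (hφ : ∀ a x, mul x (φ a x) = a)
    (op : Q → Q → Q) (oneo : Q)
    (hopone_l : ∀ x, op oneo x = x) (hopone_r : ∀ x, op x oneo = x)
    (hopL : ∀ c, Function.Bijective (fun x => op c x))
    (hopR : ∀ c, Function.Bijective (fun x => op x c))
    (ψ : Q → Equiv.Perm Q) (hψ : ∀ a x, op x (ψ a x) = a)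
    (α β γ : Q ≃ Q)
    (hiso : ∀ x y, γ (mul x y) = op (α x) (β y))
    (hmain : ∀ i, φ (γ.symm oneo) * (φ i)⁻¹ * φ (γ.symm oneo) =
      φ (γ.symm (ψ oneo (γ i)))) :
    ∀ x y, ψ oneo (op x y) = op (ψ oneo y) (ψ oneo x) :=
  stmt_17_general mul hL φ hφ op oneo hopone_l hopone_r hopL ψ hψ α β γ hiso hmain
end

section
/- Let Q(∘) be a D-loop with identity 1 and let Q(·) be a principal isotope of Q(∘), i.e., x·y = α(x)∘β(y) for some bijections α, β of Q. Then the tracks (φ_i) of the quasigroup Q(·) satisfy φ₁ ∘ φ_i⁻¹ ∘ φ₁ = φ_{i⁻¹} for every i ∈ Q, where φ₁ is the track of Q(·) at the element 1 and i⁻¹ is the loop-inverse of i computed in the D-loop Q(∘). -/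
/-- Let `Q(∘)` be a D-loop with identity `one` and loop-inverse
map `inv`, and let `Q(·)` be a principal isotope of `Q(∘)`:
`x·y = α(x) ∘ β(y)` for bijections `α, β`. Then the tracks `φ` of `Q(·)`
satisfy `φ₁ ∘ φ_i⁻¹ ∘ φ₁ = φ_{i⁻¹}` for every `i ∈ Q`, where `φ₁` is the track
of `Q(·)` at the element `1` (the identity of `Q(∘)`) and `i⁻¹ = inv i` is the
loop-inverse of `i` computed in `Q(∘)`. -/
theorem stmt_19 {Q : Type*} (op : Q → Q → Q) (one : Q)
    (hopone_l : ∀ x, op one x = x) (hopone_r : ∀ x, op x one = x)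
    (hopL : ∀ c, Function.Bijective (fun x => op c x))
    (hopR : ∀ c, Function.Bijective (fun x => op x c))
    (inv : Q → Q) (hinv : ∀ a, op a (inv a) = one)
    (hD : ∀ x y, inv (op x y) = op (inv y) (inv x))
    (mul : Q → Q → Q) (α β : Q → Q)
    (hα : Function.Bijective α) (hβ : Function.Bijective β)
    (hmul : ∀ x y, mul x y = op (α x) (β y))
    (φ : Q → Equiv.Perm Q) (hφ : ∀ a x, mul x (φ a x) = a) :
    ∀ i, φ one * (φ i)⁻¹ * φ one = φ (inv i) := by
  -- inv one = one
  have hinvone : inv one = one := by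
    have := hinv one; rwa [hopone_l] at this
  -- inv is an involution
  have hinvinv : ∀ a, inv (inv a) = a := by
    intro a
    have h1 : inv (op a (inv a)) = op (inv (inv a)) (inv a) := hD a (inv a)
    rw [hinv a, hinvone] at h1
    have h2 : op (inv (inv a)) (inv a) = op a (inv a) := by
      rw [← h1, hinv a]
    exact (hopR (inv a)).1 h2
  -- β (φ one t) = inv (α t)
  have hβφ : ∀ t, β (φ one t) = inv (α t) := by
    intro t
    have h1 : op (α t) (β (φ one t)) = one := by
      rw [← hmul]; exact hφ one t
    exact (hopL (α t)).1 (h1.trans (hinv (α t)).symm)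
  -- mul x is injective
  have hmulinj : ∀ x, Function.Injective (mul x) := by
    intro x u v h
    rw [hmul, hmul] at h
    exact hβ.1 ((hopL (α x)).1 h)
  intro i
  ext x
  show φ one ((φ i)⁻¹ (φ one x)) = φ (inv i) x
  set y := (φ i)⁻¹ (φ one x) with hy
  have hiy : φ i y = φ one x := by
    rw [hy]; exact Equiv.apply_symm_apply _ _
  have hstar : op (α y) (inv (α x)) = i := by
    have := hφ i y
    rwa [hmul, hiy, hβφ] at this
  have hkey : op (α x) (inv (α y)) = inv i := by
    rw [← hstar, hD, hinvinv]
  apply hmulinj x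
  rw [hφ (inv i) x, hmul, hβφ, hkey]
end
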